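/- arXiv:1208.0492 — 2 statements merged into one kernel-verified Lean document; each statement's English description precedes it below -/
import Mathlib

section
/- Let p be a prime with p ≡ 1 (mod 3), let χ be a multiplicative character of F_p of order 3 with values in ℂ, let φ be the quadratic character of F_p, and for i = 1, 2 let ψ_i be a multiplicative character of F_p with ψ_i² = χ^i. Then N_3(1/2) = p + ∑_{i=1}^{2} χ^{i}(−1) · ( J(ψ_i, χ^i) + J(φψ_i, χ^i) ), where 1/2 denotes the inverse of 2 in F_p. (This is the l = 3 case of the paper's Theorem 1.8, formula (1.10), stated there as −a_p(C_{3,1/2}) = 2 + p·∑_{i=1}^{2} [ (√χ^i choose χ^{−i}) + (φ√χ^i choose χ^{−i}) ], translated via (A choose B) = B(−1)/p · J(A, B̄) and a_p = p − N_3(1/2) − 2.) -/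
open Finset Polynomial

private lemma count_pow_eq {p : ℕ} [Fact p.Prime] {n : ℕ} (hn : n ≠ 0)
    (ξ : MulChar (ZMod p) ℂ) (hξ : orderOf ξ = n) (a : ZMod p) :
    ((Finset.univ.filter fun y : ZMod p => y ^ n = a).card : ℂ)
      = (if a = 0 then 1 else 0) + ∑ j ∈ Finset.range n, (ξ ^ j) a := by
  by_cases ha : a = 0
  · subst ha
    have h1 : (Finset.univ.filter fun y : ZMod p => y ^ n = 0) = {0} := by
      ext y; simp [pow_eq_zero_iff hn]
    rw [h1, Finset.sum_eq_zero (fun j _ => MulChar.map_zero (ξ ^ j))]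
    simp
  · obtain ⟨g, hg⟩ := IsCyclic.exists_generator (α := (ZMod p)ˣ)
    have hcard : orderOf g = p - 1 := by
      rw [orderOf_eq_card_of_forall_mem_zpowers hg, Nat.card_eq_fintype_card, ZMod.card_units]
    have hdvd : n ∣ p - 1 := by
      have := MulChar.orderOf_dvd_card_sub_one (F := ZMod p) ξ
      rwa [hξ, ZMod.card] at this
    have hp2 : 2 ≤ p := (Fact.out : p.Prime).two_le
    have hgne : orderOf g ≠ 0 := by omega
    have hpow : ∀ x : (ZMod p)ˣ, ∃ k : ℕ, g ^ k = x := by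
      intro x
      have := ((isOfFinOrder_of_finite g).mem_powers_iff_mem_zpowers).mpr (hg x)
      rwa [Submonoid.mem_powers_iff] at this
    have hωn : ∀ m : ℕ, (ξ ↑g) ^ m = 1 ↔ ξ ^ m = 1 := by
      intro m
      constructor
      · intro h
        apply MulChar.ext
        intro x
        obtain ⟨k, rfl⟩ := hpow x
        rw [MulChar.one_apply_coe, MulChar.pow_apply_coe, Units.val_pow_eq_pow_val,
          map_pow, ← pow_mul, mul_comm, pow_mul, h, one_pow]
      · intro h
        rw [← MulChar.pow_apply_coe, h, MulChar.one_apply_coe]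
    have hωord : orderOf (ξ ↑g) = n := by
      rw [← hξ]; exact orderOf_eq_orderOf_iff.mpr hωn
    obtain ⟨u, rfl⟩ := isUnit_iff_ne_zero.mpr ha
    obtain ⟨k, rfl⟩ := hpow u
    have hcube : (∃ α : ZMod p, α ^ n = ((g ^ k : (ZMod p)ˣ) : ZMod p)) ↔ n ∣ k := by
      constructor
      · rintro ⟨α, hα⟩
        have hα0 : IsUnit α := by
          refine isUnit_iff_ne_zero.mpr (fun h => ?_)
          rw [h, zero_pow hn] at hα
          exact (g ^ k).ne_zero hα.symm
        obtain ⟨v, rfl⟩ := hα0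
        obtain ⟨m, rfl⟩ := hpow v
        have h1 : g ^ (m * n) = g ^ k := by
          ext
          rw [Units.val_pow_eq_pow_val, pow_mul, Units.val_pow_eq_pow_val]
          exact hα
        have hdvd' : n ∣ orderOf g := by rw [hcard]; exact hdvd
        have hmod : m * n ≡ k [MOD n] :=
          (pow_eq_pow_iff_modEq.mp h1).of_dvd hdvd'
        have h2 := hmod.symm
        unfold Nat.ModEq at h2
        rw [Nat.mul_mod_left] at h2
        exact Nat.dvd_of_mod_eq_zero h2
      · rintro ⟨m, rfl⟩
        exact ⟨((g ^ m : (ZMod p)ˣ) : ZMod p), by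
          rw [← Units.val_pow_eq_pow_val, ← pow_mul, mul_comm m n]⟩
    -- LHS
    have hζord : orderOf (g ^ ((p - 1) / n)) = n := by
      have hdvd' : n ∣ orderOf g := by rw [hcard]; exact hdvd
      have := orderOf_pow_orderOf_div (x := g) (n := n) hgne hdvd'
      rwa [hcard] at this
    have hζ : IsPrimitiveRoot ((g ^ ((p - 1) / n) : (ZMod p)ˣ) : ZMod p) n := by
      have := IsPrimitiveRoot.orderOf ((g ^ ((p - 1) / n) : (ZMod p)ˣ) : ZMod p)
      rwa [orderOf_units, hζord] at this
    have hfil : (Finset.univ.filter fun y : ZMod p => y ^ n = ((g ^ k : (ZMod p)ˣ) : ZMod p))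
        = (nthRoots n ((g ^ k : (ZMod p)ˣ) : ZMod p)).toFinset := by
      ext y
      simp [Polynomial.mem_nthRoots (Nat.pos_of_ne_zero hn)]
    rw [hfil, Multiset.toFinset_card_of_nodup (hζ.nthRoots_nodup (g ^ k).ne_zero),
      hζ.card_nthRoots]
    -- RHS characters
    have happ : ∀ j, (ξ ^ j) ((g ^ k : (ZMod p)ˣ) : ZMod p) = ((ξ ↑g) ^ k) ^ j := by
      intro j
      rw [MulChar.pow_apply_coe, Units.val_pow_eq_pow_val, map_pow]
    simp only [happ]
    rw [if_neg ha]
    by_cases hk : n ∣ k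
    · rw [if_pos (hcube.mpr hk)]
      have h1 : (ξ ↑g) ^ k = 1 := orderOf_dvd_iff_pow_eq_one.mp (hωord ▸ hk)
      simp [h1]
    · rw [if_neg (fun h => hk (hcube.mp h))]
      have hne1 : (ξ ↑g) ^ k ≠ 1 := fun h =>
        hk (hωord ▸ orderOf_dvd_iff_pow_eq_one.mpr h)
      have h0 : (ξ ↑g) ^ n = 1 := by rw [← hωord]; exact pow_orderOf_eq_one _
      have hxn : ((ξ ↑g) ^ k) ^ n = 1 := by
        rw [← pow_mul, mul_comm, pow_mul, h0, one_pow]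
      rw [geom_sum_eq hne1, hxn]
      simp

private lemma delta_add_one_apply {p : ℕ} [Fact p.Prime] (t : ZMod p) :
    (if t = 0 then (1 : ℂ) else 0) + (1 : MulChar (ZMod p) ℂ) t = 1 := by
  by_cases h : t = 0
  · simp [h, MulChar.map_zero]
  · simp [h, MulChar.one_apply (isUnit_iff_ne_zero.mpr h)]


private lemma square_count {p : ℕ} [Fact p.Prime] (φ : MulChar (ZMod p) ℂ)
    (hφ : orderOf φ = 2) (t : ZMod p) :
    ((Finset.univ.filter fun u : ZMod p => u ^ 2 = t).card : ℂ) = 1 + φ t := by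
  rw [count_pow_eq (two_ne_zero) φ hφ t]
  rw [Finset.sum_range_succ, Finset.sum_range_one, pow_zero, pow_one, ← add_assoc,
    delta_add_one_apply]

private lemma key {p : ℕ} [Fact p.Prime] (h2 : (2 : ZMod p) ≠ 0)
    (η ρ φ : MulChar (ZMod p) ℂ) (hρ : ρ ^ 2 = η) (hη3 : η ^ 3 = 1)
    (hφ : orderOf φ = 2) :
    ∑ x : ZMod p, η (x * (x - 1) * (x - (2 : ZMod p)⁻¹))
      = η (-1) * ((∑ t : ZMod p, ρ t * η (1 - t)) + ∑ t : ZMod p, (φ * ρ) t * η (1 - t)) := by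
  classical
  have h2i : (2 : ZMod p)⁻¹ ≠ 0 := inv_ne_zero h2
  -- step (a): substitution x = 2⁻¹ * (1 + u)
  set e : ZMod p ≃ ZMod p :=
    (Equiv.addLeft (1 : ZMod p)).trans (Equiv.mulLeft₀ (2 : ZMod p)⁻¹ h2i) with he
  have hsub : ∑ x : ZMod p, η (x * (x - 1) * (x - (2 : ZMod p)⁻¹))
      = ∑ u : ZMod p, η (((2:ZMod p)⁻¹) ^ 3 * (u * (u ^ 2 - 1))) := by
    rw [← Equiv.sum_comp e (fun x => η (x * (x - 1) * (x - (2 : ZMod p)⁻¹)))]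
    refine Finset.sum_congr rfl (fun u _ => ?_)
    congr 1
    show ((2:ZMod p)⁻¹ * (1 + u)) * (((2:ZMod p)⁻¹ * (1 + u)) - 1) *
        (((2:ZMod p)⁻¹ * (1 + u)) - (2:ZMod p)⁻¹) = _
    field_simp
    ring
  rw [hsub]
  -- step: kill the 8⁻¹ factor
  have hcubes : ∀ x : ZMod p, x ≠ 0 → η x ^ 3 = 1 := by
    intro x hx
    rw [← MulChar.pow_apply' η three_ne_zero, hη3,
      MulChar.one_apply (isUnit_iff_ne_zero.mpr hx)]
  have h8 : ∀ w : ZMod p, η (((2:ZMod p)⁻¹) ^ 3 * w) = η w := by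
    intro w
    rw [map_mul, map_pow, hcubes _ h2i, one_mul]
  simp only [h8]
  -- step (b): η u = ρ (u^2)
  have hsq : ∀ u : ZMod p, η (u * (u ^ 2 - 1)) = ρ (u ^ 2) * η (u ^ 2 - 1) := by
    intro u
    rw [map_mul, map_pow, ← MulChar.pow_apply' ρ two_ne_zero, hρ]
  simp only [hsq]
  -- step (c): fiberwise sum over t = u^2
  have hfib : ∑ u : ZMod p, ρ (u ^ 2) * η (u ^ 2 - 1)
      = ∑ t : ZMod p, ((Finset.univ.filter fun u : ZMod p => u ^ 2 = t).card : ℂ)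
          * (ρ t * η (t - 1)) := by
    rw [← Finset.sum_fiberwise Finset.univ (fun u : ZMod p => u ^ 2)
      (fun u => ρ (u ^ 2) * η (u ^ 2 - 1))]
    refine Finset.sum_congr rfl (fun t _ => ?_)
    rw [Finset.sum_congr rfl (fun u hu => ?_), Finset.sum_const, nsmul_eq_mul]
    rw [(Finset.mem_filter.mp hu).2]
  rw [hfib]
  have hcnt : ∀ t : ZMod p,
      ((Finset.univ.filter fun u : ZMod p => u ^ 2 = t).card : ℂ) * (ρ t * η (t - 1))
        = ρ t * η (t - 1) + (φ * ρ) t * η (t - 1) := by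
    intro t
    rw [square_count φ hφ t, MulChar.mul_apply]
    ring
  rw [Finset.sum_congr rfl (fun t _ => hcnt t), Finset.sum_add_distrib]
  -- step (d): η (t-1) = η(-1) * η(1-t)
  have hneg : ∀ (A : MulChar (ZMod p) ℂ) (t : ZMod p),
      A t * η (t - 1) = η (-1) * (A t * η (1 - t)) := by
    intro A t
    have : (t - 1 : ZMod p) = -1 * (1 - t) := by ring
    rw [this, map_mul]
    ring
  rw [Finset.sum_congr rfl (fun t _ => hneg ρ t),
    Finset.sum_congr rfl (fun t _ => hneg (φ * ρ) t),
    ← Finset.mul_sum, ← Finset.mul_sum, mul_add]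

/-- case `l = 3` of Theorem 1.8, formula (1.10): For a prime
`p ≡ 1 (mod 3)`, `χ` of order `3`, `φ` the quadratic character, and square roots
`ψ_i` of `χ^i` for `i = 1, 2`,
`N_3(1/2) = p + ∑_{i=1}^{2} χ^i(−1) (J(ψ_i, χ^i) + J(φψ_i, χ^i))`. -/
theorem point_count_half_cubic (p : ℕ) [Fact p.Prime] (hp3 : p % 3 = 1)
    (χ φ : MulChar (ZMod p) ℂ) (hχ : orderOf χ = 3) (hφ : orderOf φ = 2)
    (ψ : ℕ → MulChar (ZMod p) ℂ)
    (hψ : ∀ i ∈ Finset.Icc 1 2, (ψ i) ^ 2 = χ ^ i) :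
    ((Finset.univ.filter
        (fun v : ZMod p × ZMod p =>
          v.2 ^ 3 = v.1 * (v.1 - 1) * (v.1 - (2 : ZMod p)⁻¹))).card : ℂ) =
      p + ∑ i ∈ Finset.Icc 1 2,
        (χ ^ i) (-1) *
          ((∑ t : ZMod p, (ψ i) t * (χ ^ i) (1 - t)) +
            ∑ t : ZMod p, (φ * ψ i) t * (χ ^ i) (1 - t)) := by
  classical
  have hp : p.Prime := Fact.out
  have hpne2 : p ≠ 2 := by rintro rfl; simp at hp3
  have h2 : (2 : ZMod p) ≠ 0 := by
    have h := (ZMod.natCast_eq_zero_iff 2 p).not.mpr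
      (fun h => hpne2 ((Nat.prime_dvd_prime_iff_eq hp Nat.prime_two).mp h))
    simpa using h
  -- split the double count
  have hsplitN : (Finset.univ.filter
        (fun v : ZMod p × ZMod p =>
          v.2 ^ 3 = v.1 * (v.1 - 1) * (v.1 - (2 : ZMod p)⁻¹))).card
      = ∑ x : ZMod p, (Finset.univ.filter
          (fun y : ZMod p => y ^ 3 = x * (x - 1) * (x - (2 : ZMod p)⁻¹))).card := by
    rw [Finset.card_filter, Fintype.sum_prod_type]
    exact Finset.sum_congr rfl fun x _ => (Finset.card_filter _ _).symm
  rw [hsplitN]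
  push_cast
  have hcount : ∀ x : ZMod p,
      ((Finset.univ.filter
        (fun y : ZMod p => y ^ 3 = x * (x - 1) * (x - (2 : ZMod p)⁻¹))).card : ℂ)
      = 1 + ((χ ^ 1) (x * (x - 1) * (x - (2 : ZMod p)⁻¹))
          + (χ ^ 2) (x * (x - 1) * (x - (2 : ZMod p)⁻¹))) := by
    intro x
    rw [count_pow_eq (by norm_num : (3:ℕ) ≠ 0) χ hχ]
    rw [show (3:ℕ) = 2 + 1 from rfl, Finset.sum_range_succ, Finset.sum_range_succ,
      Finset.sum_range_one, pow_zero, ← add_assoc, ← add_assoc, delta_add_one_apply]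
    ring
  rw [Finset.sum_congr rfl (fun x _ => hcount x), Finset.sum_add_distrib,
    Finset.sum_const, Finset.card_univ, ZMod.card, nsmul_eq_mul, mul_one,
    Finset.sum_add_distrib]
  have hχ3 : χ ^ 3 = 1 := by rw [← hχ]; exact pow_orderOf_eq_one χ
  have hkey : ∀ i ∈ Finset.Icc 1 2,
      ∑ x : ZMod p, (χ ^ i) (x * (x - 1) * (x - (2 : ZMod p)⁻¹))
        = (χ ^ i) (-1) *
          ((∑ t : ZMod p, (ψ i) t * (χ ^ i) (1 - t)) +
            ∑ t : ZMod p, (φ * ψ i) t * (χ ^ i) (1 - t)) := by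
    intro i hi
    exact key h2 (χ ^ i) (ψ i) φ (hψ i hi)
      (by rw [← pow_mul, mul_comm, pow_mul, hχ3, one_pow]) hφ
  rw [show Finset.Icc 1 2 = ({1, 2} : Finset ℕ) from rfl,
    Finset.sum_pair (by norm_num : (1:ℕ) ≠ 2),
    ← hkey 1 (by decide), ← hkey 2 (by decide)]
end

section
/- The period Ω(C_{2,1/2}) = ∫_0^{1/2} (u(1/2−u)(1−u))^{−1/2} du satisfies (√2 / (2π)) · Ω(C_{2,1/2}) = Γ(5/4) / ( Γ(3/2)·Γ(3/4) ), where Γ is the real Gamma function. (The right-hand side is the generalized binomial coefficient (1/4 choose 1/2) := Γ(5/4)/(Γ(3/2)Γ(3/4)).) -/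
open MeasureTheory Set



lemma real_beta {a b : ℝ} (ha : 0 < a) (hb : 0 < b) :
    ∫ x in (0:ℝ)..1, x ^ (a-1) * (1-x) ^ (b-1) =
      Real.Gamma a * Real.Gamma b / Real.Gamma (a+b) := by
  have h := Complex.Gamma_mul_Gamma_eq_betaIntegral (s := (a:ℂ)) (t := (b:ℂ))
    (by simpa using ha) (by simpa using hb)
  have hbeta : Complex.betaIntegral a b =
      ((∫ x in (0:ℝ)..1, x ^ (a-1) * (1-x) ^ (b-1) : ℝ) : ℂ) := by
    rw [Complex.betaIntegral, ← intervalIntegral.integral_ofReal]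
    apply intervalIntegral.integral_congr
    intro x hx
    rw [Set.uIcc_of_le (by norm_num : (0:ℝ) ≤ 1)] at hx
    simp only []
    rw [Complex.ofReal_mul, Complex.ofReal_cpow hx.1,
      Complex.ofReal_cpow (by linarith [hx.2] : (0:ℝ) ≤ 1 - x)]
    push_cast
    ring
  rw [hbeta, ← Complex.ofReal_add, Complex.Gamma_ofReal, Complex.Gamma_ofReal,
    Complex.Gamma_ofReal, ← Complex.ofReal_mul, ← Complex.ofReal_mul] at h
  have h' := Complex.ofReal_injective h
  have hpos : Real.Gamma (a+b) ≠ 0 := (Real.Gamma_pos_of_pos (by linarith)).ne'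
  field_simp
  linarith [h']



private noncomputable def fsub (w : ℝ) : ℝ := (1 - Real.sqrt (1 - w)) / 2

private lemma fsub_image : fsub '' Ioo (0:ℝ) 1 = Ioo (0:ℝ) (1/2) := by
  ext u
  constructor
  · rintro ⟨w, hw, rfl⟩
    obtain ⟨hw0, hw1⟩ := hw
    set s := Real.sqrt (1 - w) with hs
    have hs0 : 0 < s := Real.sqrt_pos.2 (by linarith)
    have hs2 : s ^ 2 = 1 - w := Real.sq_sqrt (by linarith)
    have hs1 : s < 1 := by nlinarith
    constructor
    · simp only [fsub]; linarith
    · simp only [fsub]; linarith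
  · intro hu
    refine ⟨1 - (1 - 2*u)^2, ⟨by nlinarith [hu.1, hu.2], by nlinarith [hu.1, hu.2]⟩, ?_⟩
    simp only [fsub]
    rw [show (1:ℝ) - (1 - (1 - 2*u)^2) = (1 - 2*u)^2 by ring,
      Real.sqrt_sq (by linarith [hu.2])]
    ring

private lemma fsub_inj : InjOn fsub (Ioo (0:ℝ) 1) := by
  intro w1 h1 w2 h2 heq
  simp only [fsub] at heq
  have e : Real.sqrt (1 - w1) = Real.sqrt (1 - w2) := by linarith
  have : (1:ℝ) - w1 = 1 - w2 := by
    rw [← Real.sq_sqrt (by linarith [h1.2] : (0:ℝ) ≤ 1 - w1),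
      ← Real.sq_sqrt (by linarith [h2.2] : (0:ℝ) ≤ 1 - w2), e]
  linarith

private lemma fsub_deriv {w : ℝ} (hw : w ∈ Ioo (0:ℝ) 1) :
    HasDerivWithinAt fsub (1 / (4 * Real.sqrt (1 - w))) (Ioo (0:ℝ) 1) w := by
  have hs0 : 0 < Real.sqrt (1 - w) := Real.sqrt_pos.2 (by linarith [hw.2])
  have h1 : HasDerivAt (fun w : ℝ => 1 - w) (-1) w := (hasDerivAt_id w).const_sub 1
  have h2 : HasDerivAt (fun w : ℝ => Real.sqrt (1 - w))
      (1 / (2 * Real.sqrt (1 - w)) * (-1)) w :=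
    (Real.hasDerivAt_sqrt (by linarith [hw.2] : (1:ℝ) - w ≠ 0)).comp w h1
  have h3 : HasDerivAt fsub (1 / (4 * Real.sqrt (1 - w))) w := by
    have := (h2.const_sub 1).div_const 2
    exact this.congr_deriv (by ring)
  exact h3.hasDerivWithinAt

private lemma omega_sub :
    ∫ u in (0:ℝ)..(1/2:ℝ), (u * (1/2 - u) * (1 - u)) ^ (-(1/2):ℝ)
      = Real.sqrt 2 / 2 * ∫ x in (0:ℝ)..1, x ^ ((1/2:ℝ)-1) * (1-x) ^ ((1/4:ℝ)-1) := by
  rw [intervalIntegral.integral_of_le (by norm_num), integral_Ioc_eq_integral_Ioo, ← fsub_image,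
    integral_image_eq_integral_abs_deriv_smul measurableSet_Ioo (fun x hx => fsub_deriv hx)
      fsub_inj]
  rw [intervalIntegral.integral_of_le (by norm_num), integral_Ioc_eq_integral_Ioo,
    ← integral_const_mul]
  apply setIntegral_congr_fun measurableSet_Ioo
  intro w hw
  obtain ⟨hw0, hw1⟩ := hw
  set s := Real.sqrt (1 - w) with hsdef
  have hs0 : 0 < s := Real.sqrt_pos.2 (by linarith)
  have hs2 : s ^ 2 = 1 - w := Real.sq_sqrt (by linarith)
  have hs1 : s < 1 := by nlinarith
  have hprod : fsub w * (1/2 - fsub w) * (1 - fsub w) = w * s / 8 := by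
    simp only [fsub]
    linear_combination (-(s/8) : ℝ) * hs2
  have e1 : s ^ (-(1/2):ℝ) = (1-w) ^ (-(1/4):ℝ) := by
    rw [hsdef, Real.sqrt_eq_rpow, ← Real.rpow_mul (by linarith)]
    norm_num
  have e2 : s⁻¹ = (1-w) ^ (-(1/2):ℝ) := by
    rw [Real.rpow_neg (by linarith), ← Real.sqrt_eq_rpow, hsdef]
  have e3 : ((8:ℝ)) ^ (-(1/2):ℝ) = (2 * Real.sqrt 2)⁻¹ := by
    rw [Real.rpow_neg (by norm_num), ← Real.sqrt_eq_rpow,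
      show (8:ℝ) = 2^2 * 2 by norm_num, Real.sqrt_mul (by positivity),
      Real.sqrt_sq (by norm_num)]
  have e4 : (1-w) ^ (-(1/4):ℝ) * (1-w) ^ (-(1/2):ℝ) = (1-w) ^ (-(3/4):ℝ) := by
    rw [← Real.rpow_add (by linarith)]
    norm_num
  simp only []
  rw [smul_eq_mul, abs_of_pos (by positivity), hprod,
    Real.div_rpow (by positivity) (by norm_num), Real.mul_rpow hw0.le hs0.le, e1, e3]
  rw [show ((1/2:ℝ)-1) = (-(1/2):ℝ) by norm_num, show ((1/4:ℝ)-1) = (-(3/4):ℝ) by norm_num,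
    ← e4, ← e2]
  field_simp
  ring

/-- The period `Ω(C_{2,1/2}) = ∫_0^{1/2} (u(1/2−u)(1−u))^{−1/2} du`
satisfies `(√2/(2π)) Ω(C_{2,1/2}) = Γ(5/4)/(Γ(3/2)Γ(3/4))`, the right-hand side
being the generalized binomial coefficient `(1/4 choose 1/2)`. -/
theorem omega_two_half_eq_binom :
    Real.sqrt 2 / (2 * Real.pi) *
        ∫ u in (0 : ℝ)..(1 / 2 : ℝ),
          (u * (1 / 2 - u) * (1 - u)) ^ (-(1 / 2 : ℝ)) =
      Real.Gamma (5 / 4) / (Real.Gamma (3 / 2) * Real.Gamma (3 / 4)) := by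
  rw [omega_sub, real_beta (by norm_num) (by norm_num)]
  have h34 : (1/2:ℝ) + 1/4 = 3/4 := by norm_num
  rw [h34]
  have g54 : Real.Gamma (5/4) = (1/4) * Real.Gamma (1/4) := by
    rw [show (5/4:ℝ) = 1/4 + 1 by norm_num, Real.Gamma_add_one (by norm_num)]
  have g32 : Real.Gamma (3/2) = (1/2) * Real.Gamma (1/2) := by
    rw [show (3/2:ℝ) = 1/2 + 1 by norm_num, Real.Gamma_add_one (by norm_num)]
  rw [g54, g32, Real.Gamma_one_half_eq]
  have h2 : Real.sqrt 2 * Real.sqrt 2 = 2 := Real.mul_self_sqrt (by norm_num)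
  have hp : Real.sqrt Real.pi * Real.sqrt Real.pi = Real.pi := Real.mul_self_sqrt Real.pi_pos.le
  have hppos : (0:ℝ) < Real.sqrt Real.pi := Real.sqrt_pos.2 Real.pi_pos
  have hG34 : (0:ℝ) < Real.Gamma (3/4) := Real.Gamma_pos_of_pos (by norm_num)
  have hpi : (0:ℝ) < Real.pi := Real.pi_pos
  field_simp
  linear_combination (4 * (Real.sqrt Real.pi * Real.sqrt Real.pi)) * h2 +
    8 * hp
end
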